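/- (Fast alignment) Suppose (x_i, v_i)_{i=1}^N follows the sticky particle Cucker–Smale dynamics associated to masses (m_i)_{i=1}^N and protocol φ. Define D_N(t) = x_N(t) − x_1(t), V_N(t) = max_{1≤i≤N} v_i(t) − min_{1≤i≤N} v_i(t), and Φ(x) = ∫_0^x φ(y)dy. Assume sup_{R>0} Φ(R) > E⁰ := Φ(D_N(0)) + V_N(0), and set D̄ := inf{R ≥ 0 : Φ(R) ≥ E⁰}. Then for all t ≥ 0, V_N(t) ≤ V_N(0)·exp(−φ(D̄)·t). -/

import Mathlib

/-!
At a time without collision, a fastest particle is only pulled back and a slowest one only pushed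
forward, each with weight at least `φ(D)` because `φ` is even and decreasing on `(0, ∞)` and all
distances are at most `D`; hence the upper right Dini derivative of `V` is at most `-φ(D) V`.
A collision replaces velocities by mass-weighted means of left limits, so `V` can only jump down.
Since `Φ(D)' ≤ φ(D) V`, the energy `Φ(D) + V` never exceeds `E⁰`, so `Φ(D) < E⁰` and thus
`D ≤ D̄` while `V > 0`. Then `φ(D) ≥ φ(D̄)`, and Grönwall's inequality, applied between the finitely
many collision times, gives the exponential decay. If all particles have met, `V = 0` from then on.
-/

open MeasureTheory Set Filter
open scoped Classical

/-- `Φ(x) = ∫_0^x φ(y) dy`, the odd antiderivative of the communication protocol. -/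
noncomputable def Phi (φ : ℝ → ℝ) (x : ℝ) : ℝ := ∫ y in (0:ℝ)..x, φ y

/-- The sticky particle Cucker–Smale dynamics with `N` particles, masses `m`,
communication protocol `φ`, collision-time set `C`, positions `x` and velocities `v`. -/
structure StickyCS (N : ℕ) (m : Fin N → ℝ) (φ : ℝ → ℝ) (C : Set ℝ)
    (x v : Fin N → ℝ → ℝ) : Prop where
  m_pos : ∀ i, 0 < m i
  m_sum : ∑ i, m i = 1
  φ_nonneg : ∀ z, 0 ≤ φ z
  φ_even : ∀ z, φ (-z) = φ z
  φ_locint : ∀ a b : ℝ, IntervalIntegrable φ volume a b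
  φ_anti : AntitoneOn φ (Ioi 0)
  φ_cont : ContinuousOn φ {(0:ℝ)}ᶜ
  C_fin : C.Finite
  C_pos : C ⊆ Ioi 0
  x_cont : ∀ i, ContinuousOn (x i) (Ici 0)
  x_ord : ∀ i j : Fin N, i ≤ j → ∀ t ∈ Ici (0:ℝ), x i t ≤ x j t
  v_rc : ∀ i, ∀ t ∈ Ici (0:ℝ), ContinuousWithinAt (v i) (Ici t) t
  x_deriv : ∀ i, ∀ t ∈ Ici (0:ℝ) \ C, HasDerivWithinAt (x i) (v i t) (Ici 0) t
  v_deriv : ∀ i, ∀ t ∈ Ici (0:ℝ) \ C, HasDerivWithinAt (v i)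
      (∑ j ∈ Finset.univ.filter (fun j => x j t ≠ x i t),
        m j * φ (x j t - x i t) * (v j t - v i t)) (Ici 0) t
  sticky : ∀ i j : Fin N, ∀ s t : ℝ, 0 ≤ s → s ≤ t → x i s = x j s → x i t = x j t
  collide : ∀ τ ∈ C, ∀ i : Fin N,
      v i τ = (∑ j ∈ Finset.univ.filter (fun j => x j τ = x i τ),
                m j * Function.leftLim (v j) τ)
              / (∑ j ∈ Finset.univ.filter (fun j => x j τ = x i τ), m j)


open scoped Topology

section Protocol

variable {φ : ℝ → ℝ}

lemma Phi_monotone (hint : ∀ a b : ℝ, IntervalIntegrable φ volume a b) (hnonneg : ∀ z, 0 ≤ φ z) :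
    Monotone (Phi φ) := fun a b hab => by
  have hsplit : Phi φ b = Phi φ a + ∫ y in a..b, φ y :=
    (intervalIntegral.integral_add_adjacent_intervals (hint 0 a) (hint a b)).symm
  linarith [intervalIntegral.integral_nonneg (μ := volume) hab fun u _ => hnonneg u]

lemma Phi_continuous (hint : ∀ a b : ℝ, IntervalIntegrable φ volume a b) : Continuous (Phi φ) :=
  intervalIntegral.continuous_primitive hint 0

lemma hasDerivAt_Phi (hint : ∀ a b : ℝ, IntervalIntegrable φ volume a b)
    (hcont : ContinuousOn φ {(0:ℝ)}ᶜ) {z : ℝ} (hz : z ≠ 0) : HasDerivAt (Phi φ) (φ z) z :=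
  intervalIntegral.integral_hasDerivAt_right (hint 0 z)
    (hcont.stronglyMeasurableAtFilter isOpen_compl_singleton z hz)
    (hcont.continuousAt (isOpen_compl_singleton.mem_nhds hz))

lemma AntitoneOn.apply_le_of_abs_le (hanti : AntitoneOn φ (Ioi 0)) (heven : ∀ z, φ (-z) = φ z)
    {z R : ℝ} (hz : z ≠ 0) (hzR : |z| ≤ R) : φ R ≤ φ z := by
  have habs : φ |z| = φ z := by rcases abs_choice z with h | h <;> simp [h, heven]
  rw [← habs]
  exact hanti (abs_pos.2 hz) ((abs_pos.2 hz).trans_le hzR) hzR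

end Protocol

/-- The upper right Dini derivative of `f` at `s` is at most `c`. -/
def RightDiniLE (f : ℝ → ℝ) (s c : ℝ) : Prop :=
  ∀ r, c < r → ∀ᶠ z in 𝓝[>] s, f z - f s < r * (z - s)

section RightDini

variable {f g : ℝ → ℝ} {s c d : ℝ}

lemma HasDerivWithinAt.rightDiniLE (hf : HasDerivWithinAt f c (Ici s) s) : RightDiniLE f s c := by
  intro r hr
  have hslope := hasDerivWithinAt_iff_tendsto_slope.1 hf
  rw [Ici_sdiff_left] at hslope
  filter_upwards [hslope.eventually_lt_const hr, self_mem_nhdsWithin] with z hz hzs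
  rwa [slope_def_field, div_lt_iff₀ (sub_pos.2 hzs)] at hz

lemma RightDiniLE.mono (hf : RightDiniLE f s c) (hcd : c ≤ d) : RightDiniLE f s d :=
  fun r hr => hf r (hcd.trans_lt hr)

lemma RightDiniLE.add (hf : RightDiniLE f s c) (hg : RightDiniLE g s d) :
    RightDiniLE (fun z => f z + g z) s (c + d) := by
  intro r hr
  filter_upwards [hf (c + (r - c - d) / 2) (by linarith), hg (d + (r - c - d) / 2) (by linarith)]
    with z hfz hgz
  linarith

/-- Only the functions attaining the maximum at `s` matter: the others stay strictly below it
for a while, by right continuity. -/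
lemma RightDiniLE.finset_sup' {ι : Type*} {S : Finset ι} (hS : S.Nonempty) {F : ι → ℝ → ℝ}
    (hcont : ∀ i ∈ S, ContinuousWithinAt (F i) (Ioi s) s)
    (hmax : ∀ i ∈ S, (∀ j ∈ S, F j s ≤ F i s) → RightDiniLE (F i) s c) :
    RightDiniLE (fun z => S.sup' hS (F · z)) s c := by
  intro r hr
  set M := S.sup' hS (F · s)
  have hbelow : ∀ i ∈ S, ∀ᶠ z in 𝓝[>] s, F i z < M + r * (z - s) := by
    intro i hi
    rcases (S.le_sup' (F · s) hi).eq_or_lt with hiM | hiM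
    · have hargmax : ∀ j ∈ S, F j s ≤ F i s := fun j hj => hiM ▸ S.le_sup' (F · s) hj
      filter_upwards [hmax i hi hargmax r hr] with z hz
      linarith
    · have hlim : Tendsto (fun z => F i z - r * (z - s)) (𝓝[>] s) (𝓝 (F i s - r * (s - s))) :=
        (hcont i hi).sub (by fun_prop : Continuous fun z => r * (z - s)).continuousWithinAt
      filter_upwards [hlim.eventually_lt_const (by simpa using hiM)] with z hz
      linarith
  filter_upwards [(Filter.eventually_all_finset S).2 hbelow] with z hz
  exact sub_lt_iff_lt_add'.2 ((Finset.sup'_lt_iff hS).2 hz)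

end RightDini

section Gronwall

variable {f : ℝ → ℝ} {K : ℝ}

lemma le_mul_exp_of_rightDiniLE {a b : ℝ} (hab : a ≤ b) (hf : ContinuousOn f (Icc a b))
    (hdini : ∀ s ∈ Ioo a b, RightDiniLE f s (K * f s)) :
    f b ≤ f a * Real.exp (K * (b - a)) := by
  rcases hab.eq_or_lt with rfl | hab
  · simp
  -- Grönwall on `[a', b]` for `a < a'`, where the Dini bound holds everywhere, then `a' → a`.
  have hinner : ∀ a' ∈ Ioo a b, f b ≤ f a' * Real.exp (K * (b - a')) := by
    intro a' ha'
    have hgron := le_gronwallBound_of_liminf_deriv_right_le (f' := fun s => K * f s) (K := K)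
      (ε := 0)
      (hf.mono (Icc_subset_Icc ha'.1.le le_rfl))
      (fun s hs r hr => ((hdini s ⟨ha'.1.trans_le hs.1, hs.2⟩ r hr).and
          self_mem_nhdsWithin).frequently.mono fun z ⟨hz, hzs⟩ => by
        rwa [inv_mul_lt_iff₀ (sub_pos.2 hzs), mul_comm])
      le_rfl (fun _ _ => by simp) b ⟨ha'.2.le, le_rfl⟩
    rwa [gronwallBound_ε0] at hgron
  have hlim : Tendsto (fun a' => f a' * Real.exp (K * (b - a'))) (𝓝[>] a)
      (𝓝 (f a * Real.exp (K * (b - a)))) :=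
    ((hf a ⟨le_rfl, hab.le⟩).mono_of_mem_nhdsWithin (Icc_mem_nhdsGT hab)).mul
      (by fun_prop : Continuous fun a' => Real.exp (K * (b - a'))).continuousWithinAt
  exact ge_of_tendsto hlim (eventually_of_mem (Ioo_mem_nhdsGT hab) hinner)

lemma le_mul_exp_of_rightDiniLE_of_finite {C : Set ℝ} (hC : C.Finite) {t : ℝ} (ht : 0 ≤ t)
    (hrc : ∀ s ∈ Icc 0 t, ContinuousWithinAt f (Ici s) s)
    (hcont : ∀ s ∈ Ioc 0 t \ C, ContinuousAt f s)
    (hdini : ∀ s ∈ Ioo 0 t \ C, RightDiniLE f s (K * f s))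
    (hjump : ∀ τ ∈ C ∩ Ioc 0 t, ∃ L, Tendsto f (𝓝[<] τ) (𝓝 L) ∧ f τ ≤ L) :
    f t ≤ f 0 * Real.exp (K * t) := by
  have hsegment : ∀ a ∈ Icc 0 t, ∀ b ∈ Icc a t, (∀ u ∈ Ioc a b, u ∉ C) →
      f b ≤ f a * Real.exp (K * (b - a)) := by
    rintro a ⟨ha0, hat⟩ b ⟨hab, hbt⟩ hfree
    refine le_mul_exp_of_rightDiniLE hab (fun u hu => ?_) fun u hu =>
      hdini u ⟨⟨ha0.trans_lt hu.1, hu.2.trans_le hbt⟩, hfree u ⟨hu.1, hu.2.le⟩⟩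
    rcases hu.1.eq_or_lt with hau | hau
    · rw [← hau]
      exact (hrc a ⟨ha0, hat⟩).mono Icc_subset_Ici_self
    · exact (hcont u ⟨⟨ha0.trans_lt hau, hu.2.trans hbt⟩, hfree u ⟨hau, hu.2⟩⟩).continuousWithinAt
  suffices ∀ S : Finset ℝ, ∀ s ∈ Icc 0 t, C ∩ Ioc 0 s ⊆ S → f s ≤ f 0 * Real.exp (K * s) from
    this hC.toFinset t ⟨ht, le_rfl⟩ fun u hu => hC.mem_toFinset.2 hu.1
  intro S
  induction S using Finset.induction_on_max with
  | empty =>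
    intro s hs hS
    simpa using hsegment 0 ⟨le_rfl, ht⟩ s hs fun u hu huC => by simpa using hS ⟨huC, hu⟩
  | insert a S hlt ih =>
    intro s hs hS
    have hS' : ∀ u, u ≠ a → u ∈ C ∩ Ioc 0 s → u ∈ S := fun u hua hu =>
      (Finset.mem_insert.1 (hS hu)).resolve_left hua
    by_cases ha : a ∈ C ∩ Ioc 0 s
    swap
    · exact ih s hs fun u hu => hS' u (by rintro rfl; exact ha hu) hu
    obtain ⟨haC, ha0, has⟩ := ha
    have hbefore : ∀ u ∈ Ico 0 a, f u ≤ f 0 * Real.exp (K * u) := fun u hu =>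
      ih u ⟨hu.1, hu.2.le.trans (has.trans hs.2)⟩ fun w hw =>
        hS' w (hw.2.2.trans_lt hu.2).ne ⟨hw.1, hw.2.1, hw.2.2.trans (hu.2.le.trans has)⟩
    obtain ⟨L, hL, haL⟩ := hjump a ⟨haC, ha0, has.trans hs.2⟩
    have hat : f a ≤ f 0 * Real.exp (K * a) :=
      haL.trans <| le_of_tendsto_of_tendsto hL
        (by fun_prop : Continuous fun u => f 0 * Real.exp (K * u)).continuousWithinAt
        (eventually_of_mem (Ioo_mem_nhdsLT ha0) fun u hu => hbefore u ⟨hu.1.le, hu.2⟩)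
    have hafter : ∀ u ∈ Ioc a s, u ∉ C := fun u hu huC =>
      (hlt u (hS' u hu.1.ne' ⟨huC, ha0.trans hu.1, hu.2⟩)).not_gt hu.1
    calc f s ≤ f a * Real.exp (K * (s - a)) :=
          hsegment a ⟨ha0.le, has.trans hs.2⟩ s ⟨has, hs.2⟩ hafter
      _ ≤ f 0 * Real.exp (K * a) * Real.exp (K * (s - a)) := by gcongr
      _ = f 0 * Real.exp (K * s) := by rw [mul_assoc, ← Real.exp_add]; ring_nf

end Gronwall

section Spread

variable {ι : Type*} [Fintype ι] [Nonempty ι]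

noncomputable def spread (u : ι → ℝ) : ℝ :=
  Finset.univ.sup' Finset.univ_nonempty u - Finset.univ.inf' Finset.univ_nonempty u

lemma sub_le_spread (u : ι → ℝ) (i j : ι) : u i - u j ≤ spread u :=
  sub_le_sub (Finset.le_sup' u (Finset.mem_univ i)) (Finset.inf'_le u (Finset.mem_univ j))

lemma spread_nonneg (u : ι → ℝ) : 0 ≤ spread u := by
  simpa using sub_le_spread u (Classical.arbitrary ι) (Classical.arbitrary ι)

lemma spread_le_of_forall_mem_Icc {u : ι → ℝ} {a b : ℝ} (hu : ∀ i, u i ∈ Icc a b) :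
    spread u ≤ b - a :=
  sub_le_sub (Finset.sup'_le _ _ fun i _ => (hu i).2) (Finset.le_inf' _ _ fun i _ => (hu i).1)

lemma Filter.Tendsto.spread {α : Type*} {l : Filter α} {F : ι → α → ℝ} {g : ι → ℝ}
    (hF : ∀ i, Tendsto (F i) l (𝓝 (g i))) : Tendsto (fun a => spread (F · a)) l (𝓝 (spread g)) :=
  (Tendsto.finset_sup'_nhds_apply _ fun i _ => hF i).sub
    (Tendsto.finset_inf'_nhds_apply _ fun i _ => hF i)

lemma RightDiniLE.spread {F : ι → ℝ → ℝ} {s a b : ℝ}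
    (hcont : ∀ i, ContinuousWithinAt (F i) (Ioi s) s)
    (hmax : ∀ i, (∀ j, F j s ≤ F i s) → RightDiniLE (F i) s a)
    (hmin : ∀ i, (∀ j, F i s ≤ F j s) → RightDiniLE (fun z => -F i z) s b) :
    RightDiniLE (fun z => spread (F · z)) s (a + b) := by
  have hneg : ∀ z, -Finset.univ.inf' Finset.univ_nonempty (F · z) =
      Finset.univ.sup' Finset.univ_nonempty (fun i => -F i z) := fun z => by
    obtain ⟨i, -, hi⟩ := Finset.exists_mem_eq_inf' Finset.univ_nonempty (F · z)
    exact le_antisymm (hi ▸ Finset.le_sup' (fun i => -F i z) (Finset.mem_univ i))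
      (Finset.sup'_le _ _ fun j _ => neg_le_neg (Finset.inf'_le _ (Finset.mem_univ j)))
  have hsum := (RightDiniLE.finset_sup' Finset.univ_nonempty (fun i _ => hcont i)
      fun i _ hi => hmax i fun j => hi j (Finset.mem_univ j)).add
    (RightDiniLE.finset_sup' (F := fun i z => -F i z) Finset.univ_nonempty
      (fun i _ => (hcont i).neg)
      fun i _ hi => hmin i fun j => neg_le_neg_iff.1 (hi j (Finset.mem_univ j)))
  simpa only [_root_.spread, sub_eq_add_neg, hneg] using hsum

end Spread

namespace StickyCS

variable {N : ℕ} {m : Fin N → ℝ} {φ : ℝ → ℝ} {C : Set ℝ} {x v : Fin N → ℝ → ℝ}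

lemma v_eq_of_x_eq (h : StickyCS N m φ C x v) {i j : Fin N} {t : ℝ} (ht : 0 ≤ t)
    (hx : x i t = x j t) : v i t = v j t := by
  by_cases htC : t ∈ C
  · rw [h.collide t htC i, h.collide t htC j, hx]
  · have hsub : Ici t ⊆ Ici (0:ℝ) := Ici_subset_Ici.2 ht
    have heq : EqOn (x j) (x i) (Ici t) := fun s hs => (h.sticky i j t s ht hs hx).symm
    have hi : HasDerivWithinAt (x j) (v i t) (Ici t) t :=
      ((h.x_deriv i t ⟨ht, htC⟩).mono hsub).congr heq (heq self_mem_Ici)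
    exact (uniqueDiffOn_Ici t t self_mem_Ici).eq_deriv _ hi ((h.x_deriv j t ⟨ht, htC⟩).mono hsub)

lemma continuousAt_v (h : StickyCS N m φ C x v) {t : ℝ} (ht : 0 < t) (htC : t ∉ C) (i : Fin N) :
    ContinuousAt (v i) t :=
  (h.v_deriv i t ⟨ht.le, htC⟩).continuousWithinAt.continuousAt (Ici_mem_nhds ht)

lemma eventually_filter_x_ne_eq (h : StickyCS N m φ C x v) {τ : ℝ} (hτ : 0 < τ) (j : Fin N) :
    ∃ S : Finset (Fin N), ∀ᶠ u in 𝓝[<] τ,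
      0 < u ∧ u ∉ C ∧ Finset.univ.filter (fun k => x k u ≠ x j u) = S := by
  refine ⟨Finset.univ.filter fun k => ∀ s ∈ Ico 0 τ, x k s ≠ x j s, ?_⟩
  have hC : ∀ᶠ u in 𝓝[<] τ, u ∉ C := by
    have hclosed : IsClosed (C \ {τ}) := h.C_fin.sdiff.isClosed
    filter_upwards [nhdsWithin_le_nhds (hclosed.isOpen_compl.mem_nhds fun hτC => hτC.2 rfl),
      self_mem_nhdsWithin] with u hu (huτ : u < τ) huC
    exact hu ⟨huC, huτ.ne⟩
  have hk : ∀ k, ∀ᶠ u in 𝓝[<] τ, 0 < u → (x k u ≠ x j u ↔ ∀ s ∈ Ico 0 τ, x k s ≠ x j s) := by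
    intro k
    by_cases hsep : ∀ s ∈ Ico 0 τ, x k s ≠ x j s
    · filter_upwards [self_mem_nhdsWithin] with u (huτ : u < τ) hu0
      exact iff_of_true (hsep u ⟨hu0.le, huτ⟩) hsep
    · push Not at hsep
      obtain ⟨s, hs, hxs⟩ := hsep
      filter_upwards [Ioo_mem_nhdsLT hs.2] with u hu _
      exact iff_of_false (not_not.2 (h.sticky k j s u hs.1 hu.1.le hxs))
        fun hne => hne s hs hxs
  filter_upwards [Ioo_mem_nhdsLT hτ, hC, eventually_all.2 hk] with u hu huC hiff
  exact ⟨hu.1, huC, Finset.ext fun k => by simp [hiff k hu.1]⟩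

/-- Shortly before `τ`, `v j - ∑_{k ∈ S} m k Φ(x k - x j)` is constant, `S` being the particles
not stuck to `j`. -/
lemma exists_tendsto_v_nhdsLT (h : StickyCS N m φ C x v) {τ : ℝ} (hτ : 0 < τ) (j : Fin N) :
    ∃ L, Tendsto (v j) (𝓝[<] τ) (𝓝 L) := by
  obtain ⟨S, hS⟩ := h.eventually_filter_x_ne_eq hτ j
  obtain ⟨a, haτ, ha⟩ := mem_nhdsLT_iff_exists_Ioo_subset.1 hS
  set Q : ℝ → ℝ := fun u => ∑ k ∈ S, m k * Phi φ (x k u - x j u)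
  have hxc : ∀ k, ∀ u, 0 < u → ContinuousAt (x k) u := fun k u hu =>
    (h.x_cont k u hu.le).continuousAt (Ici_mem_nhds hu)
  have hQτ : ContinuousAt Q τ := by
    simp only [Q]
    exact tendsto_finsetSum _ fun k _ => continuousAt_const.mul
      ((Phi_continuous h.φ_locint).continuousAt.comp ((hxc k τ hτ).sub (hxc j τ hτ)))
  have hderiv : ∀ u ∈ Ioo a τ, HasDerivAt (v j)
      (∑ k ∈ S, m k * (φ (x k u - x j u) * (v k u - v j u))) u ∧
      HasDerivAt Q (∑ k ∈ S, m k * (φ (x k u - x j u) * (v k u - v j u))) u := by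
    intro u hu
    obtain ⟨hu0, huC, hSu⟩ := ha hu
    have hx : ∀ k, HasDerivAt (x k) (v k u) u := fun k =>
      (h.x_deriv k u ⟨hu0.le, huC⟩).hasDerivAt (Ici_mem_nhds hu0)
    refine ⟨?_, HasDerivAt.fun_sum fun k hk => ((hasDerivAt_Phi h.φ_locint h.φ_cont ?_).comp u
      ((hx k).sub (hx j))).const_mul (m k)⟩
    · have hv := (h.v_deriv j u ⟨hu0.le, huC⟩).hasDerivAt (Ici_mem_nhds hu0)
      rw [hSu] at hv
      simpa only [mul_assoc] using hv
    · rw [← hSu] at hk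
      exact sub_ne_zero.2 (Finset.mem_filter.1 hk).2
  obtain ⟨c, hc⟩ := isOpen_Ioo.exists_eq_add_of_deriv_eq isPreconnected_Ioo
    (fun u hu => (hderiv u hu).1.differentiableAt.differentiableWithinAt)
    (fun u hu => (hderiv u hu).2.differentiableAt.differentiableWithinAt)
    fun u hu => (hderiv u hu).1.deriv.trans (hderiv u hu).2.deriv.symm
  exact ⟨Q τ + c, ((hQτ.tendsto.mono_left nhdsWithin_le_nhds).add_const c).congr'
    (eventually_of_mem (Ioo_mem_nhdsLT haτ) fun u hu => (hc hu).symm)⟩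

/-- At a collision each velocity becomes a mass-weighted mean of left limits. -/
lemma exists_tendsto_spread_v_nhdsLT [Nonempty (Fin N)] (h : StickyCS N m φ C x v) {τ : ℝ}
    (hτ : τ ∈ C) :
    ∃ L, Tendsto (fun t => spread (v · t)) (𝓝[<] τ) (𝓝 L) ∧ spread (v · τ) ≤ L := by
  choose L hL using h.exists_tendsto_v_nhdsLT (h.C_pos hτ)
  refine ⟨spread L, Tendsto.spread hL, spread_le_of_forall_mem_Icc fun i => ?_⟩
  set G := Finset.univ.filter fun j => x j τ = x i τ
  have hiG : i ∈ G := by simp [G]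
  have hG : 0 < ∑ j ∈ G, m j := Finset.sum_pos (fun j _ => h.m_pos j) ⟨i, hiG⟩
  have hmean : v i τ = G.centerMass m L := by
    simp only [h.collide τ hτ i, Finset.centerMass, smul_eq_mul, leftLim_eq_of_tendsto (hL _)]
    exact div_eq_inv_mul _ _
  rw [hmean]
  exact ⟨(Finset.inf'_mono L (Finset.subset_univ G) ⟨i, hiG⟩).trans
      (Finset.inf_le_centerMass (fun j _ => (h.m_pos j).le) hG),
    (Finset.centerMass_le_sup (fun j _ => (h.m_pos j).le) hG).trans
      (Finset.sup'_mono L (Finset.subset_univ G) ⟨i, hiG⟩)⟩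

lemma sum_filter_x_ne_mul (h : StickyCS N m φ C x v) {t : ℝ} (ht : 0 ≤ t) (p : Fin N) (c : ℝ) :
    ∑ j ∈ Finset.univ.filter (fun j => x j t ≠ x p t), m j * c * (v j t - v p t) =
      c * (∑ j, m j * v j t - v p t) := by
  have hstuck : ∀ j ∈ Finset.univ, m j * c * (v j t - v p t) ≠ 0 → x j t ≠ x p t :=
    fun j _ hj hx => hj (by rw [h.v_eq_of_x_eq ht hx, sub_self, mul_zero])
  calc ∑ j ∈ Finset.univ.filter (fun j => x j t ≠ x p t), m j * c * (v j t - v p t)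
      = c * (∑ j, m j * v j t - (∑ j, m j) * v p t) := by
        rw [Finset.sum_filter_of_ne hstuck, Finset.sum_mul, ← Finset.sum_sub_distrib,
          Finset.mul_sum]
        exact Finset.sum_congr rfl fun j _ => by ring
    _ = c * (∑ j, m j * v j t - v p t) := by rw [h.m_sum, one_mul]

lemma accel_le_of_forall_v_le (h : StickyCS N m φ C x v) {t R : ℝ} (ht : 0 ≤ t) {p : Fin N}
    (hR : ∀ j, |x j t - x p t| ≤ R) (hp : ∀ j, v j t ≤ v p t) :
    ∑ j ∈ Finset.univ.filter (fun j => x j t ≠ x p t), m j * φ (x j t - x p t) * (v j t - v p t)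
      ≤ φ R * (∑ j, m j * v j t - v p t) := by
  rw [← h.sum_filter_x_ne_mul ht p]
  refine Finset.sum_le_sum fun j hj => ?_
  have hφ := h.φ_anti.apply_le_of_abs_le h.φ_even (sub_ne_zero.2 (Finset.mem_filter.1 hj).2) (hR j)
  rw [mul_assoc, mul_assoc]
  exact mul_le_mul_of_nonneg_left (mul_le_mul_of_nonpos_right hφ (sub_nonpos.2 (hp j)))
    (h.m_pos j).le

lemma le_accel_of_forall_le_v (h : StickyCS N m φ C x v) {t R : ℝ} (ht : 0 ≤ t) {q : Fin N}
    (hR : ∀ j, |x j t - x q t| ≤ R) (hq : ∀ j, v q t ≤ v j t) :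
    φ R * (∑ j, m j * v j t - v q t) ≤
      ∑ j ∈ Finset.univ.filter (fun j => x j t ≠ x q t),
        m j * φ (x j t - x q t) * (v j t - v q t) := by
  rw [← h.sum_filter_x_ne_mul ht q]
  refine Finset.sum_le_sum fun j hj => ?_
  have hφ := h.φ_anti.apply_le_of_abs_le h.φ_even (sub_ne_zero.2 (Finset.mem_filter.1 hj).2) (hR j)
  rw [mul_assoc, mul_assoc]
  exact mul_le_mul_of_nonneg_left (mul_le_mul_of_nonneg_right hφ (sub_nonneg.2 (hq j)))
    (h.m_pos j).le

lemma rightDiniLE_spread_v [Nonempty (Fin N)] (h : StickyCS N m φ C x v) {t R : ℝ} (ht : 0 ≤ t)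
    (htC : t ∉ C) (hR : ∀ i j, |x j t - x i t| ≤ R) :
    RightDiniLE (fun z => spread (v · z)) t (-(φ R * spread (v · t))) := by
  set M := Finset.univ.sup' Finset.univ_nonempty (v · t)
  set μ := Finset.univ.inf' Finset.univ_nonempty (v · t)
  have hv : ∀ i, HasDerivWithinAt (v i) _ (Ici t) t := fun i =>
    (h.v_deriv i t ⟨ht, htC⟩).mono (Ici_subset_Ici.2 ht)
  have hdini := RightDiniLE.spread (a := φ R * (∑ j, m j * v j t - M))
    (b := -(φ R * (∑ j, m j * v j t - μ)))
    (fun i => (h.v_rc i t ht).mono Ioi_subset_Ici_self)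
    (fun p hp => (hv p).rightDiniLE.mono <| (h.accel_le_of_forall_v_le ht (hR p) hp).trans <|
      mul_le_mul_of_nonneg_left
        (sub_le_sub_left (Finset.sup'_le _ (v · t) fun j _ => hp j) _)
        (h.φ_nonneg R))
    (fun q hq => (hv q).neg.rightDiniLE.mono <| neg_le_neg <|
      (mul_le_mul_of_nonneg_left
        (sub_le_sub_left (Finset.le_inf' _ (v · t) fun j _ => hq j) _)
        (h.φ_nonneg R)).trans (h.le_accel_of_forall_le_v ht (hR q) hq))
  convert hdini using 1
  simp only [spread, M, μ]
  ring

lemma continuousWithinAt_spread_v [Nonempty (Fin N)] (h : StickyCS N m φ C x v) {t : ℝ}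
    (ht : 0 ≤ t) : ContinuousWithinAt (fun s => spread (v · s)) (Ici t) t :=
  Tendsto.spread fun i => h.v_rc i t ht

lemma continuousAt_spread_v [Nonempty (Fin N)] (h : StickyCS N m φ C x v) {t : ℝ} (ht : 0 < t)
    (htC : t ∉ C) : ContinuousAt (fun s => spread (v · s)) t :=
  Tendsto.spread fun i => h.continuousAt_v ht htC i

lemma add_spread_v_le_mul_exp [Nonempty (Fin N)] (h : StickyCS N m φ C x v) {g : ℝ → ℝ}
    {K t : ℝ} (ht : 0 ≤ t) (hg : ContinuousOn g (Ici 0))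
    (hdini : ∀ s ∈ Ioo 0 t \ C,
      RightDiniLE (fun z => g z + spread (v · z)) s (K * (g s + spread (v · s)))) :
    g t + spread (v · t) ≤ (g 0 + spread (v · 0)) * Real.exp (K * t) := by
  have hgc : ∀ s, 0 < s → ContinuousAt g s := fun s hs => hg.continuousAt (Ici_mem_nhds hs)
  refine le_mul_exp_of_rightDiniLE_of_finite h.C_fin ht
    (fun s hs => ((hg s hs.1).mono (Ici_subset_Ici.2 hs.1)).add
      (h.continuousWithinAt_spread_v hs.1))
    (fun s hs => (hgc s hs.1.1).add (h.continuousAt_spread_v hs.1.1 hs.2)) hdini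
    fun τ hτ => ?_
  obtain ⟨L, hL, hτL⟩ := h.exists_tendsto_spread_v_nhdsLT hτ.1
  exact ⟨g τ + L, ((hgc τ hτ.2.1).tendsto.mono_left nhdsWithin_le_nhds).add hL,
    (add_le_add_iff_left (g τ)).2 hτL⟩

variable {I J : Fin N}

lemma abs_x_sub_le (h : StickyCS N m φ C x v) (hI : ∀ i, I ≤ i) (hJ : ∀ i, i ≤ J) {t : ℝ}
    (ht : 0 ≤ t) (i j : Fin N) : |x j t - x i t| ≤ x J t - x I t := by
  have := h.x_ord I i (hI i) t ht
  have := h.x_ord I j (hI j) t ht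
  have := h.x_ord i J (hJ i) t ht
  have := h.x_ord j J (hJ j) t ht
  exact abs_sub_le_iff.2 ⟨by linarith, by linarith⟩

lemma spread_v_eq_zero [Nonempty (Fin N)] (h : StickyCS N m φ C x v) (hI : ∀ i, I ≤ i)
    (hJ : ∀ i, i ≤ J) {t : ℝ} (ht : 0 ≤ t) (hx : x J t - x I t = 0) : spread (v · t) = 0 := by
  have hv : ∀ i, v i t = v I t := fun i => h.v_eq_of_x_eq ht <| sub_eq_zero.1 <|
    abs_nonpos_iff.1 ((h.abs_x_sub_le hI hJ ht I i).trans hx.le)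
  have hle := spread_le_of_forall_mem_Icc (a := v I t) (b := v I t) fun i => ⟨(hv i).ge, (hv i).le⟩
  exact le_antisymm (by simpa using hle) (spread_nonneg _)

lemma x_sub_pos_of_le (h : StickyCS N m φ C x v) (hIJ : I ≤ J) {s t : ℝ} (hs : s ∈ Icc 0 t)
    (ht : 0 < x J t - x I t) : 0 < x J s - x I s := by
  refine sub_pos.2 ((h.x_ord I J hIJ s hs.1).lt_of_ne fun hx => ?_)
  linarith [h.sticky I J s t hs.1 hs.2 hx]

/-- `Φ(D)' ≤ φ(D) V`, while the Dini derivative of `V` is at most `-φ(D) V`. -/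
lemma Phi_add_spread_v_le [Nonempty (Fin N)] (h : StickyCS N m φ C x v) (hI : ∀ i, I ≤ i)
    (hJ : ∀ i, i ≤ J) {t : ℝ} (ht : 0 ≤ t) (hpos : ∀ s ∈ Icc 0 t, 0 < x J s - x I s) :
    Phi φ (x J t - x I t) + spread (v · t) ≤ Phi φ (x J 0 - x I 0) + spread (v · 0) := by
  have hcont : ContinuousOn (fun s => x J s - x I s) (Ici 0) := (h.x_cont J).sub (h.x_cont I)
  have hdini : ∀ s ∈ Ioo 0 t \ C,
      RightDiniLE (fun z => Phi φ (x J z - x I z) + spread (v · z)) s 0 := by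
    rintro s ⟨⟨hs0, hst⟩, hsC⟩
    have hPhi := hasDerivAt_Phi h.φ_locint h.φ_cont (hpos s ⟨hs0.le, hst.le⟩).ne'
    have hD := (hPhi.comp_hasDerivWithinAt s
        ((h.x_deriv J s ⟨hs0.le, hsC⟩).fun_sub (h.x_deriv I s ⟨hs0.le, hsC⟩))).mono
        (Ici_subset_Ici.2 hs0.le)
    refine (hD.rightDiniLE.add
      (h.rightDiniLE_spread_v hs0.le hsC (h.abs_x_sub_le hI hJ hs0.le))).mono ?_
    nlinarith [sub_le_spread (v · s) J I, h.φ_nonneg (x J s - x I s)]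
  simpa using h.add_spread_v_le_mul_exp (K := 0) ht
    ((Phi_continuous h.φ_locint).comp_continuousOn hcont) fun s hs =>
      (hdini s hs).mono (by rw [zero_mul])

end StickyCS

/-- **Fast alignment.** Let `D_N(t) = x_N(t) − x_1(t)` and
`V_N(t) = max_i v_i(t) − min_i v_i(t)`. If `sup_{R>0} Φ(R) > E⁰ := Φ(D_N(0)) + V_N(0)`, then
with `D̄ := inf{R ≥ 0 : Φ(R) ≥ E⁰}` one has `V_N(t) ≤ V_N(0)·exp(−φ(D̄)t)` for all `t ≥ 0`. -/
theorem sticky_CS_fast_alignment {N : ℕ} (hN : 0 < N) (m : Fin N → ℝ) (φ : ℝ → ℝ)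
    (C : Set ℝ) (x v : Fin N → ℝ → ℝ) (h : StickyCS N m φ C x v)
    (D V : ℝ → ℝ)
    (hD : ∀ t, D t = x ⟨N - 1, Nat.sub_lt hN Nat.one_pos⟩ t - x ⟨0, hN⟩ t)
    (hV : ∀ t, V t = Finset.univ.sup' ⟨⟨0, hN⟩, Finset.mem_univ _⟩ (fun i => v i t)
        - Finset.univ.inf' ⟨⟨0, hN⟩, Finset.mem_univ _⟩ (fun i => v i t))
    (E0 : ℝ) (hE0 : E0 = Phi φ (D 0) + V 0)
    (hthreshold : ∃ R : ℝ, 0 < R ∧ E0 < Phi φ R)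
    (Dbar : ℝ) (hDbar : Dbar = sInf {R : ℝ | 0 ≤ R ∧ E0 ≤ Phi φ R}) :
    ∀ t : ℝ, 0 ≤ t → V t ≤ V 0 * Real.exp (-(φ Dbar) * t) := by
  intro t ht
  have : Nonempty (Fin N) := ⟨⟨0, hN⟩⟩
  set I : Fin N := ⟨0, hN⟩
  set J : Fin N := ⟨N - 1, Nat.sub_lt hN Nat.one_pos⟩
  have hI : ∀ i, I ≤ i := fun i => Nat.zero_le i
  have hJ : ∀ i, i ≤ J := fun i => Nat.le_sub_one_of_lt i.2
  obtain rfl : D = fun s => x J s - x I s := funext hD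
  obtain rfl : V = fun s => spread (v · s) := funext hV
  beta_reduce at hE0 ⊢
  rcases (sub_nonneg.2 (h.x_ord I J (hI J) t ht)).eq_or_lt with hDt | hDt
  · rw [h.spread_v_eq_zero hI hJ ht hDt.symm]
    exact mul_nonneg (spread_nonneg _) (Real.exp_pos _).le
  have hDpos := fun s (hs : s ∈ Icc 0 t) => h.x_sub_pos_of_le (hI J) hs hDt
  have hφ : ∀ s ∈ Icc 0 t, 0 < spread (v · s) → φ Dbar ≤ φ (x J s - x I s) := by
    intro s hs hVs
    have henergy := h.Phi_add_spread_v_le hI hJ hs.1 fun u hu => hDpos u ⟨hu.1, hu.2.trans hs.2⟩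
    obtain ⟨R, hR, hRE⟩ := hthreshold
    have hle : x J s - x I s ≤ Dbar := hDbar ▸ le_csInf ⟨R, hR.le, hRE.le⟩ fun R' hR' =>
      ((Phi_monotone h.φ_locint h.φ_nonneg).reflect_lt (by linarith [hR'.2])).le
    exact h.φ_anti (hDpos s hs) ((hDpos s hs).trans_le hle) hle
  simpa using h.add_spread_v_le_mul_exp (g := fun _ => 0) (K := -φ Dbar) ht
    continuousOn_const fun s hs => by
    simp only [zero_add]
    refine (h.rightDiniLE_spread_v hs.1.1.le hs.2 (h.abs_x_sub_le hI hJ hs.1.1.le)).mono ?_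
    rcases (spread_nonneg (v · s)).eq_or_lt with hV0 | hVpos
    · simp [← hV0]
    · nlinarith [hφ s (Ioo_subset_Icc_self hs.1) hVpos]
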